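/- Let ν be a measure on (0,∞) with ∫ x² ν(dx) < ∞. Define h̃ on the closed negative quadrant {(w₁,w₂) : w₁ ≤ 0, w₂ ≤ 0} by h̃(w₁,w₂) = (1/(w₁-w₂)) ∫ (e^{xw₁} - e^{xw₂} - x(w₁-w₂)) ν(dx) when w₁ ≠ w₂, and h̃(w,w) = ∫ x(e^{xw} - 1) ν(dx). Then h̃ is continuous on the negative quadrant and h̃(w₁,w₂) ≤ 0 everywhere on it. -/

import Mathlib

/-!
Writing `g(u, v) = ∫₀¹ (exp (t u + (1 - t) v) - 1) dt`, which is `(eᵘ - eᵛ)/(u - v) - 1` off the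
diagonal and `eᵘ - 1` on it, one has `h̃(w₁, w₂) = ∫ x g(x w₁, x w₂) ν(dx)` on the whole quadrant.
On the negative quadrant `g` is nonpositive, since the exponent is, and `|g(u, v)| ≤ |u| + |v|`,
since `|e^z - 1| ≤ |z|` for `z ≤ 0`. Hence the integrand is nonpositive and dominated by a multiple
of `x²` locally uniformly in `(w₁, w₂)`, so dominated convergence gives continuity.
-/

open MeasureTheory Real Set Filter

noncomputable def divDiffExpSubOne (u v : ℝ) : ℝ :=
  ∫ t in (0 : ℝ)..1, (exp (t * u + (1 - t) * v) - 1)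

lemma continuous_divDiffExpSubOne : Continuous fun p : ℝ × ℝ => divDiffExpSubOne p.1 p.2 :=
  intervalIntegral.continuous_parametric_intervalIntegral_of_continuous'
    (f := fun (p : ℝ × ℝ) (t : ℝ) => exp (t * p.1 + (1 - t) * p.2) - 1) (by fun_prop) 0 1

lemma divDiffExpSubOne_self (u : ℝ) : divDiffExpSubOne u u = exp u - 1 := by
  simp [divDiffExpSubOne, show ∀ t : ℝ, t * u + (1 - t) * u = u from fun t => by ring]

lemma divDiffExpSubOne_of_ne {u v : ℝ} (h : u ≠ v) :
    divDiffExpSubOne u v = (exp u - exp v) / (u - v) - 1 := by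
  have huv : u - v ≠ 0 := sub_ne_zero.mpr h
  have hexp : ∫ t in (0 : ℝ)..1, exp (t * u + (1 - t) * v) = (exp u - exp v) / (u - v) := by
    simp_rw [show ∀ t : ℝ, t * u + (1 - t) * v = (u - v) * t + v from fun t => by ring]
    rw [intervalIntegral.integral_comp_mul_add exp huv, integral_exp]
    simp [div_eq_inv_mul]
  rw [divDiffExpSubOne, intervalIntegral.integral_sub
    (Continuous.intervalIntegrable (by fun_prop) 0 1) intervalIntegrable_const,
    hexp]
  simp

lemma mul_add_one_sub_mul_nonpos {u v t : ℝ} (hu : u ≤ 0) (hv : v ≤ 0) (ht : t ∈ Icc (0 : ℝ) 1) :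
    t * u + (1 - t) * v ≤ 0 := by
  nlinarith [ht.1, ht.2]

lemma divDiffExpSubOne_nonpos {u v : ℝ} (hu : u ≤ 0) (hv : v ≤ 0) : divDiffExpSubOne u v ≤ 0 := by
  have h := intervalIntegral.integral_nonneg (μ := volume) zero_le_one
    (f := fun t => -(exp (t * u + (1 - t) * v) - 1)) fun t ht =>
      neg_nonneg.mpr (sub_nonpos.mpr (exp_le_one_iff.mpr (mul_add_one_sub_mul_nonpos hu hv ht)))
  rw [intervalIntegral.integral_neg] at h
  exact neg_nonneg.mp h

lemma abs_divDiffExpSubOne_le {u v : ℝ} (hu : u ≤ 0) (hv : v ≤ 0) :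
    |divDiffExpSubOne u v| ≤ |u| + |v| := by
  have hbound : ∀ t ∈ uIoc (0 : ℝ) 1, ‖exp (t * u + (1 - t) * v) - 1‖ ≤ |u| + |v| := by
    intro t ht
    rw [uIoc_of_le zero_le_one] at ht
    have hz := mul_add_one_sub_mul_nonpos hu hv (Ioc_subset_Icc_self ht)
    rw [norm_eq_abs, abs_sub_comm, abs_of_nonneg (by linarith [exp_le_one_iff.mpr hz])]
    nlinarith [add_one_le_exp (t * u + (1 - t) * v), neg_abs_le u, neg_abs_le v, ht.1, ht.2]
  simpa [divDiffExpSubOne] using intervalIntegral.norm_integral_le_of_norm_le_const hbound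

section Integral

variable {ν : Measure ℝ}

lemma integral_mul_divDiffExpSubOne_of_ne (hν : ∀ᵐ x ∂ν, x ≠ 0) {w₁ w₂ : ℝ} (h : w₁ ≠ w₂) :
    ∫ x, x * divDiffExpSubOne (x * w₁) (x * w₂) ∂ν =
      1 / (w₁ - w₂) * ∫ x, (exp (x * w₁) - exp (x * w₂) - x * (w₁ - w₂)) ∂ν := by
  rw [← integral_const_mul]
  refine integral_congr_ae ?_
  filter_upwards [hν] with x hx
  have hne : x * w₁ ≠ x * w₂ := fun hc => h (mul_left_cancel₀ hx hc)
  have hsub : x * w₁ - x * w₂ ≠ 0 := sub_ne_zero.mpr hne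
  have hw : w₁ - w₂ ≠ 0 := sub_ne_zero.mpr h
  rw [divDiffExpSubOne_of_ne hne]
  field_simp

lemma integral_mul_divDiffExpSubOne_nonpos (hν : ∀ᵐ x ∂ν, 0 ≤ x) {w₁ w₂ : ℝ} (hw₁ : w₁ ≤ 0)
    (hw₂ : w₂ ≤ 0) : ∫ x, x * divDiffExpSubOne (x * w₁) (x * w₂) ∂ν ≤ 0 := by
  refine integral_nonpos_of_ae ?_
  filter_upwards [hν] with x hx
  exact mul_nonpos_of_nonneg_of_nonpos hx (divDiffExpSubOne_nonpos
    (mul_nonpos_of_nonneg_of_nonpos hx hw₁) (mul_nonpos_of_nonneg_of_nonpos hx hw₂))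

lemma norm_mul_divDiffExpSubOne_le {x w₁ w₂ : ℝ} (hx : 0 ≤ x) (hw₁ : w₁ ≤ 0) (hw₂ : w₂ ≤ 0) :
    ‖x * divDiffExpSubOne (x * w₁) (x * w₂)‖ ≤ (-w₁ - w₂) * x ^ 2 := by
  have h := abs_divDiffExpSubOne_le (mul_nonpos_of_nonneg_of_nonpos hx hw₁)
    (mul_nonpos_of_nonneg_of_nonpos hx hw₂)
  rw [abs_mul, abs_mul, abs_of_nonneg hx, abs_of_nonpos hw₁, abs_of_nonpos hw₂] at h
  rw [norm_mul, norm_eq_abs, norm_eq_abs, abs_of_nonneg hx]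
  nlinarith [abs_nonneg (divDiffExpSubOne (x * w₁) (x * w₂))]

lemma continuousOn_integral_mul_divDiffExpSubOne (hν : ∀ᵐ x ∂ν, 0 ≤ x)
    (hmom : Integrable (fun x => x ^ 2) ν) :
    ContinuousOn (fun q : ℝ × ℝ => ∫ x, x * divDiffExpSubOne (x * q.1) (x * q.2) ∂ν)
      (Iic 0 ×ˢ Iic 0) := by
  have hcont (x : ℝ) : Continuous fun q : ℝ × ℝ => x * divDiffExpSubOne (x * q.1) (x * q.2) :=
    continuous_const.mul (continuous_divDiffExpSubOne.comp
      (show Continuous fun q : ℝ × ℝ => (x * q.1, x * q.2) by fun_prop))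
  refine continuousOn_of_locally_continuousOn fun ⟨a, b⟩ _ =>
    ⟨Ioi (a - 1) ×ˢ Ioi (b - 1), isOpen_Ioi.prod isOpen_Ioi, ⟨by simp, by simp⟩, ?_⟩
  refine continuousOn_of_dominated (bound := fun x => (1 - a + (1 - b)) * x ^ 2)
    (fun q _ => (continuous_id.mul (continuous_divDiffExpSubOne.comp
      (show Continuous fun x : ℝ => (x * q.1, x * q.2) by fun_prop))).aestronglyMeasurable) ?_ (hmom.const_mul _)
    (ae_of_all _ fun x => (hcont x).continuousOn)
  rintro ⟨w₁, w₂⟩ ⟨⟨hw₁, hw₂⟩, hw₁', hw₂'⟩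
  simp only [mem_Iic, mem_Ioi] at hw₁ hw₂ hw₁' hw₂'
  filter_upwards [hν] with x hx
  calc _ ≤ (-w₁ - w₂) * x ^ 2 := norm_mul_divDiffExpSubOne_le hx hw₁ hw₂
    _ ≤ (1 - a + (1 - b)) * x ^ 2 := by gcongr; linarith

end Integral

theorem stmt_5
    (ν : Measure ℝ) (hsupp : ν (Set.Iic 0) = 0)
    (hmom : Integrable (fun x => x^2) ν)
    (htilde : ℝ → ℝ → ℝ)
    (hdef_ne : ∀ w₁ ≤ (0:ℝ), ∀ w₂ ≤ (0:ℝ), w₁ ≠ w₂ →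
      htilde w₁ w₂ = (1/(w₁ - w₂)) *
        ∫ x, (Real.exp (x * w₁) - Real.exp (x * w₂) - x * (w₁ - w₂)) ∂ν)
    (hdef_eq : ∀ w ≤ (0:ℝ),
      htilde w w = ∫ x, x * (Real.exp (x * w) - 1) ∂ν) :
    ContinuousOn (fun q : ℝ × ℝ => htilde q.1 q.2) (Set.Iic 0 ×ˢ Set.Iic 0) ∧
    ∀ w₁ ≤ (0:ℝ), ∀ w₂ ≤ (0:ℝ), htilde w₁ w₂ ≤ 0 := by
  have hpos : ∀ᵐ x ∂ν, 0 < x := ae_iff.2 (by simp only [not_lt]; exact hsupp)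
  have hrepr : ∀ w₁ ≤ (0:ℝ), ∀ w₂ ≤ (0:ℝ),
      htilde w₁ w₂ = ∫ x, x * divDiffExpSubOne (x * w₁) (x * w₂) ∂ν := by
    intro w₁ hw₁ w₂ hw₂
    rcases eq_or_ne w₁ w₂ with rfl | hne
    · simp only [hdef_eq w₁ hw₁, divDiffExpSubOne_self]
    · rw [hdef_ne w₁ hw₁ w₂ hw₂ hne,
        integral_mul_divDiffExpSubOne_of_ne (hpos.mono fun _ => ne_of_gt) hne]
  have hnonneg : ∀ᵐ x ∂ν, 0 ≤ x := hpos.mono fun _ => le_of_lt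
  exact ⟨(continuousOn_integral_mul_divDiffExpSubOne hnonneg hmom).congr
      fun q hq => hrepr q.1 hq.1 q.2 hq.2,
    fun w₁ hw₁ w₂ hw₂ =>
      (hrepr w₁ hw₁ w₂ hw₂).trans_le (integral_mul_divDiffExpSubOne_nonpos hnonneg hw₁ hw₂)⟩
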